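/- arXiv:2404.02241 — 2 statements merged into one kernel-verified Lean document; each statement's English description precedes it below -/
import Mathlib

section
/- Under the SGD setting with β-strong convexity, E[‖ĝ_n‖²] ≤ G² for all n, and step sizes η_n = 1/(βn), for every n ≥ 1 the per-iteration suboptimality satisfies E[f(θ_n) − f(θ*)] ≤ (β/2)·( (n−1)·E[‖θ_n − θ*‖²] − n·E[‖θ_{n+1} − θ*‖²] ) + G²/(2βn). -/
open MeasureTheory TopologicalSpace
open scoped RealInnerProductSpace

/-!
Strong convexity at `θ n` against `θ*` bounds `E[f (θ n) - f θ*] + (β/2) E‖θ n - θ*‖²` by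
`E⟪∇f (θ n), θ n - θ*⟫`, and expanding the square in `θ (n+1) - θ* = (θ n - θ*) - g n / (β n)`
expresses `E⟪g n, θ n - θ*⟫` through the two squared distances and `E‖g n‖²`. The two inner
products agree by the tower property, since `θ n - θ*` is `σ(θ n)`-measurable.

The delicate point is that `H` need not be separable, so a Borel measurable `θ n` need not be
strongly measurable. However `∇f` is antilipschitz by strong convexity, and `∇f ∘ θ n` agrees
a.e. with a conditional expectation, which has separable range; hence `θ n` is a.e. separably
valued. When `g n` is not integrable its conditional expectation is `0` by convention, which
forces `θ n = θ*` a.e.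
-/

theorem AntilipschitzWith.isSeparable_preimage {α β : Type*} [EMetricSpace α]
    [PseudoEMetricSpace β] {K : NNReal} {F : α → β} (hF : AntilipschitzWith K F) {t : Set β}
    (ht : IsSeparable t) : IsSeparable (F ⁻¹' t) := by
  have : SeparableSpace (F '' (F ⁻¹' t)) :=
    (ht.mono (Set.image_preimage_subset F t)).separableSpace
  choose inv _ hinv using fun y : F '' (F ⁻¹' t) => y.2
  have hlip : LipschitzWith K inv := fun y y' => by
    simpa only [hinv, Subtype.edist_eq] using hF (inv y) (inv y')
  refine (isSeparable_range hlip.continuous).mono fun x hx => ⟨⟨F x, x, hx, rfl⟩, ?_⟩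
  exact hF.injective (hinv _)

theorem Measurable.aestronglyMeasurable_of_ae_mem_isSeparable {α β : Type*}
    {m m0 : MeasurableSpace α} (hm : m ≤ m0) {μ : Measure[m0] α} [TopologicalSpace β]
    [PseudoMetrizableSpace β] [MeasurableSpace β] [BorelSpace β] {f : α → β}
    (hf : Measurable[m] f) {t : Set β} (ht : IsSeparable t) (hft : ∀ᵐ x ∂μ, f x ∈ t) :
    AEStronglyMeasurable[m] f μ := by
  have htrim : ∀ᵐ x ∂μ.trim hm, f x ∈ closure t := by
    have hs : MeasurableSet[m] {x | f x ∉ closure t} := (hf isClosed_closure.measurableSet).compl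
    rw [ae_iff, trim_measurableSet_eq hm hs]
    exact measure_mono_null (fun x hx => fun hxt => hx (subset_closure hxt)) (ae_iff.1 hft)
  obtain ⟨g, hg, hfg⟩ := (aestronglyMeasurable_iff_aemeasurable_separable (μ := μ.trim hm)).2
    ⟨hf.aemeasurable, closure t, ht.closure, htrim⟩
  exact ⟨g, hg, ae_eq_of_ae_eq_trim hfg⟩

section StrongConvexity

variable {H : Type*} [NormedAddCommGroup H] [InnerProductSpace ℝ H] [CompleteSpace H] {β : ℝ}
  {f : H → ℝ}

theorem sub_add_sq_le_inner_gradient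
    (hconv : ∀ x y : H, f y ≥ f x + ⟪gradient f x, y - x⟫ + β / 2 * ‖y - x‖ ^ 2) (x y : H) :
    f x - f y + β / 2 * ‖x - y‖ ^ 2 ≤ ⟪gradient f x, x - y⟫ := by
  have h := hconv x y
  rw [← neg_sub x y, inner_neg_right, norm_neg] at h
  linarith

theorem mul_sq_le_inner_gradient_sub
    (hconv : ∀ x y : H, f y ≥ f x + ⟪gradient f x, y - x⟫ + β / 2 * ‖y - x‖ ^ 2) (x y : H) :
    β * ‖x - y‖ ^ 2 ≤ ⟪gradient f x - gradient f y, x - y⟫ := by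
  have hxy := sub_add_sq_le_inner_gradient hconv x y
  have hyx := sub_add_sq_le_inner_gradient hconv y x
  rw [← neg_sub x y, inner_neg_right, norm_neg] at hyx
  rw [inner_sub_left]
  linarith

theorem antilipschitzWith_gradient (hβ : 0 < β)
    (hconv : ∀ x y : H, f y ≥ f x + ⟪gradient f x, y - x⟫ + β / 2 * ‖y - x‖ ^ 2) :
    AntilipschitzWith β.toNNReal⁻¹ (gradient f) := by
  refine AntilipschitzWith.of_le_mul_dist fun x y => ?_
  rw [NNReal.coe_inv, Real.coe_toNNReal _ hβ.le, dist_eq_norm, dist_eq_norm,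
    ← div_eq_inv_mul, le_div_iff₀ hβ]
  rcases (norm_nonneg (x - y)).eq_or_lt with hxy | hxy
  · rw [← hxy, zero_mul]
    exact norm_nonneg _
  refine le_of_mul_le_mul_right ?_ hxy
  calc ‖x - y‖ * β * ‖x - y‖ = β * ‖x - y‖ ^ 2 := by ring
    _ ≤ ⟪gradient f x - gradient f y, x - y⟫ := mul_sq_le_inner_gradient_sub hconv x y
    _ ≤ ‖gradient f x - gradient f y‖ * ‖x - y‖ := real_inner_le_norm _ _

theorem eq_of_gradient_eq_zero (hβ : 0 < β)
    (hconv : ∀ x y : H, f y ≥ f x + ⟪gradient f x, y - x⟫ + β / 2 * ‖y - x‖ ^ 2) {x y : H}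
    (hle : f y ≤ f x) (hx : gradient f x = 0) : x = y := by
  have h := sub_add_sq_le_inner_gradient hconv x y
  rw [hx, inner_zero_left] at h
  have : ‖x - y‖ ^ 2 ≤ 0 := by nlinarith
  simpa [sub_eq_zero] using this

theorem integral_sub_add_le_integral_inner_gradient {Ω : Type*} [MeasurableSpace Ω]
    {μ : Measure Ω} [IsFiniteMeasure μ]
    (hconv : ∀ x y : H, f y ≥ f x + ⟪gradient f x, y - x⟫ + β / 2 * ‖y - x‖ ^ 2)
    {X : Ω → H} {y : H} (hf : Integrable (fun ω => f (X ω)) μ)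
    (hX : Integrable (fun ω => ‖X ω - y‖ ^ 2) μ)
    (hgrad : Integrable (fun ω => ⟪gradient f (X ω), X ω - y⟫) μ) :
    ∫ ω, (f (X ω) - f y) ∂μ + β / 2 * ∫ ω, ‖X ω - y‖ ^ 2 ∂μ ≤
      ∫ ω, ⟪gradient f (X ω), X ω - y⟫ ∂μ := by
  have hfy : Integrable (fun ω => f (X ω) - f y) μ := hf.sub (integrable_const _)
  rw [← integral_const_mul, ← integral_add hfy (hX.const_mul _)]
  exact integral_mono (hfy.add (hX.const_mul _)) hgrad
    fun ω => sub_add_sq_le_inner_gradient hconv _ _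

end StrongConvexity

section ConditionalExpectation

variable {Ω E : Type*} [NormedAddCommGroup E] [InnerProductSpace ℝ E]

theorem MeasureTheory.MemLp.integrable_inner [MeasurableSpace Ω] {μ : Measure Ω}
    {f g : Ω → E} (hf : MemLp f 2 μ) (hg : MemLp g 2 μ) : Integrable (fun ω => ⟪f ω, g ω⟫) μ :=
  (L2.integrable_inner (𝕜 := ℝ) hf.toLp hg.toLp).congr <| by
    filter_upwards [hf.coeFn_toLp, hg.coeFn_toLp] with ω hfω hgω
    rw [hfω, hgω]

theorem integral_inner_condExp_left [CompleteSpace E] {m m0 : MeasurableSpace Ω}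
    {μ : Measure[m0] Ω} [IsFiniteMeasure μ] (hm : m ≤ m0) {g X : Ω → E} (hg : MemLp g 2 μ)
    (hX : MemLp X 2 μ) (hXm : AEStronglyMeasurable[m] X μ) :
    ∫ ω, ⟪(μ[g | m]) ω, X ω⟫ ∂μ = ∫ ω, ⟪g ω, X ω⟫ ∂μ := by
  have h := inner_condExpL2_eq_inner_fun (𝕜 := ℝ) hm hg.toLp hX.toLp
    (hXm.congr hX.coeFn_toLp.symm)
  rw [L2.inner_def, L2.inner_def] at h
  convert h using 1 <;> refine integral_congr_ae ?_
  · filter_upwards [hg.condExpL2_ae_eq_condExp (𝕜 := ℝ) hm, hX.coeFn_toLp] with ω hgω hXω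
    rw [hgω, hXω]
  · filter_upwards [hg.coeFn_toLp, hX.coeFn_toLp] with ω hgω hXω
    rw [hgω, hXω]

end ConditionalExpectation

section StochasticGradient

variable {Ω H : Type*} [MeasurableSpace Ω] {μ : Measure Ω} [NormedAddCommGroup H]
  [InnerProductSpace ℝ H] [MeasurableSpace H] [BorelSpace H]

theorem aestronglyMeasurable_comap_of_condExp_ae_eq {K : NNReal} {D : H → H}
    (hD : AntilipschitzWith K D) {θ g : Ω → H} (hθ : Measurable θ)
    (hce : μ[g | MeasurableSpace.comap θ inferInstance] =ᵐ[μ] fun ω => D (θ ω)) :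
    AEStronglyMeasurable[MeasurableSpace.comap θ inferInstance] θ μ := by
  refine (comap_measurable θ).aestronglyMeasurable_of_ae_mem_isSeparable hθ.comap_le
    (hD.isSeparable_preimage (stronglyMeasurable_condExp
      (m := MeasurableSpace.comap θ inferInstance) (f := g) (μ := μ)).isSeparable_range) ?_
  filter_upwards [hce] with ω hω
  exact ⟨ω, hω⟩

theorem integral_inner_eq_of_condExp_ae_eq [CompleteSpace H] [IsFiniteMeasure μ] {K : NNReal}
    {D : H → H} (hD : AntilipschitzWith K D) {x₀ : H} (hD₀ : ∀ x, D x = 0 → x = x₀)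
    {θ g : Ω → H} (hθ : Measurable θ)
    (hce : μ[g | MeasurableSpace.comap θ inferInstance] =ᵐ[μ] fun ω => D (θ ω))
    (hg : Integrable (fun ω => ‖g ω‖ ^ 2) μ) (hθ₀ : Integrable (fun ω => ‖θ ω - x₀‖ ^ 2) μ) :
    Integrable (fun ω => ⟪g ω, θ ω - x₀⟫) μ ∧ Integrable (fun ω => ⟪D (θ ω), θ ω - x₀⟫) μ ∧
      ∫ ω, ⟪g ω, θ ω - x₀⟫ ∂μ = ∫ ω, ⟪D (θ ω), θ ω - x₀⟫ ∂μ := by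
  by_cases hgi : Integrable g μ
  · have hXm : AEStronglyMeasurable[MeasurableSpace.comap θ inferInstance]
        (fun ω => θ ω - x₀) μ :=
      (aestronglyMeasurable_comap_of_condExp_ae_eq hD hθ hce).sub aestronglyMeasurable_const
    have hX : MemLp (fun ω => θ ω - x₀) 2 μ :=
      (memLp_two_iff_integrable_sq_norm (hXm.mono hθ.comap_le)).2 hθ₀
    have hg2 : MemLp g 2 μ := (memLp_two_iff_integrable_sq_norm hgi.1).2 hg
    have hDX : (fun ω => ⟪(μ[g | MeasurableSpace.comap θ inferInstance]) ω, θ ω - x₀⟫)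
        =ᵐ[μ] fun ω => ⟪D (θ ω), θ ω - x₀⟫ := by
      filter_upwards [hce] with ω hω
      rw [hω]
    refine ⟨hg2.integrable_inner hX, ((hg2.condExp one_le_two).integrable_inner hX).congr hDX, ?_⟩
    rw [← integral_inner_condExp_left hθ.comap_le hg2 hX hXm, integral_congr_ae hDX]
  · have hθx₀ : ∀ᵐ ω ∂μ, θ ω = x₀ := by
      rw [condExp_of_not_integrable hgi] at hce
      filter_upwards [hce] with ω hω using hD₀ _ hω.symm
    have hzero (v : Ω → H) : (fun ω => ⟪v ω, θ ω - x₀⟫) =ᵐ[μ] 0 := by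
      filter_upwards [hθx₀] with ω hω
      simp [hω]
    refine ⟨(integrable_zero _ _ _).congr (hzero g).symm,
      (integrable_zero _ _ _).congr (hzero _).symm, ?_⟩
    rw [integral_congr_ae (hzero g), integral_congr_ae (hzero fun ω => D (θ ω))]

end StochasticGradient

theorem integral_norm_sub_smul_sq {Ω H : Type*} [MeasurableSpace Ω] {μ : Measure Ω}
    [NormedAddCommGroup H] [InnerProductSpace ℝ H] {X g : Ω → H} (η : ℝ)
    (hX : Integrable (fun ω => ‖X ω‖ ^ 2) μ) (hgX : Integrable (fun ω => ⟪g ω, X ω⟫) μ)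
    (hg : Integrable (fun ω => ‖g ω‖ ^ 2) μ) :
    ∫ ω, ‖X ω - η • g ω‖ ^ 2 ∂μ =
      ∫ ω, ‖X ω‖ ^ 2 ∂μ - 2 * η * ∫ ω, ⟪g ω, X ω⟫ ∂μ + η ^ 2 * ∫ ω, ‖g ω‖ ^ 2 ∂μ := by
  have hexpand (ω : Ω) : ‖X ω - η • g ω‖ ^ 2 =
      ‖X ω‖ ^ 2 - 2 * η * ⟪g ω, X ω⟫ + η ^ 2 * ‖g ω‖ ^ 2 := by
    rw [norm_sub_sq_real, real_inner_smul_right, norm_smul, mul_pow, Real.norm_eq_abs, sq_abs,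
      real_inner_comm]
    ring
  have hXgX : Integrable (fun ω => ‖X ω‖ ^ 2 - 2 * η * ⟪g ω, X ω⟫) μ := hX.sub (hgX.const_mul _)
  simp_rw [hexpand]
  rw [integral_add hXgX (hg.const_mul _), integral_sub hX (hgX.const_mul _), integral_const_mul,
    integral_const_mul]

theorem sgd_per_iteration_suboptimality_general
    {Ω : Type*} [MeasurableSpace Ω] {μ : Measure Ω} [IsProbabilityMeasure μ]
    {H : Type*} [NormedAddCommGroup H] [InnerProductSpace ℝ H] [CompleteSpace H]
    [MeasurableSpace H] [BorelSpace H]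
    {β G : ℝ} (hβ : 0 < β)
    {f : H → ℝ}
    (hconv : ∀ x y : H,
      f y ≥ f x + ⟪gradient f x, y - x⟫ + β / 2 * ‖y - x‖ ^ 2)
    {θstar : H} (hmin : ∀ x : H, f θstar ≤ f x)
    (θ g : ℕ → Ω → H)
    (hθmeas : ∀ n, Measurable (θ n))
    (hrec : ∀ n : ℕ, 1 ≤ n → ∀ ω, θ (n + 1) ω = θ n ω - (1 / (β * n)) • g n ω)
    (hunbiased : ∀ n : ℕ, 1 ≤ n →
      μ[g n | MeasurableSpace.comap (θ n) inferInstance]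
        =ᵐ[μ] fun ω => gradient f (θ n ω))
    (hg2int : ∀ n : ℕ, 1 ≤ n → Integrable (fun ω => ‖g n ω‖ ^ 2) μ)
    (hg2 : ∀ n : ℕ, 1 ≤ n → ∫ ω, ‖g n ω‖ ^ 2 ∂μ ≤ G ^ 2)
    (hθint : ∀ n : ℕ, 1 ≤ n → Integrable (fun ω => ‖θ n ω - θstar‖ ^ 2) μ)
    (hfint : ∀ n : ℕ, 1 ≤ n → Integrable (fun ω => f (θ n ω)) μ) :
    ∀ n : ℕ, 1 ≤ n →
      ∫ ω, (f (θ n ω) - f θstar) ∂μ ≤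
        β / 2 * (((n : ℝ) - 1) * ∫ ω, ‖θ n ω - θstar‖ ^ 2 ∂μ -
            (n : ℝ) * ∫ ω, ‖θ (n + 1) ω - θstar‖ ^ 2 ∂μ) +
          G ^ 2 / (2 * β * n) := by
  intro n hn
  have hn0 : (0 : ℝ) < n := by exact_mod_cast hn
  obtain ⟨hgX, hgradX, hunbiased_inner⟩ := integral_inner_eq_of_condExp_ae_eq
    (antilipschitzWith_gradient hβ hconv) (fun x => eq_of_gradient_eq_zero hβ hconv (hmin x))
    (hθmeas n) (hunbiased n hn) (hg2int n hn) (hθint n hn)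
  have hdescent := integral_sub_add_le_integral_inner_gradient hconv (hfint n hn) (hθint n hn)
    hgradX
  have hstep := integral_norm_sub_smul_sq (1 / (β * n)) (hθint n hn) hgX (hg2int n hn)
  simp_rw [← sub_right_comm _ _ θstar, ← hrec n hn] at hstep
  set A := ∫ ω, ‖θ n ω - θstar‖ ^ 2 ∂μ
  set C := ∫ ω, ‖g n ω‖ ^ 2 ∂μ
  set I := ∫ ω, ⟪g n ω, θ n ω - θstar⟫ ∂μ
  rw [← hunbiased_inner] at hdescent
  have hC : C / (2 * β * n) ≤ G ^ 2 / (2 * β * n) := by gcongr; exact hg2 n hn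
  have hrhs : β / 2 * ((n - 1) * A - n * (A - 2 * (1 / (β * n)) * I + (1 / (β * n)) ^ 2 * C)) =
      I - β / 2 * A - C / (2 * β * n) := by
    field_simp
    ring
  rw [hstep, hrhs]
  linarith

/-- Under SGD with step sizes `η n = 1/(β n)` on a `β`-strongly convex function with
minimizer `θ*` and `E[‖ĝ n‖²] ≤ G²`, for every `n ≥ 1` the per-iteration suboptimality
satisfies
`E[f (θ n) − f θ*] ≤ (β/2) ((n−1) E[‖θ n − θ*‖²] − n E[‖θ (n+1) − θ*‖²]) + G²/(2 β n)`. -/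
theorem sgd_per_iteration_suboptimality
    {Ω : Type*} [MeasurableSpace Ω] {μ : Measure Ω} [IsProbabilityMeasure μ]
    {H : Type*} [NormedAddCommGroup H] [InnerProductSpace ℝ H] [CompleteSpace H]
    [MeasurableSpace H] [BorelSpace H]
    {β G : ℝ} (hβ : 0 < β) (hG : 0 < G)
    {f : H → ℝ} (hdiff : Differentiable ℝ f)
    (hconv : ∀ x y : H,
      f y ≥ f x + ⟪gradient f x, y - x⟫ + β / 2 * ‖y - x‖ ^ 2)
    {θstar : H} (hmin : ∀ x : H, f θstar ≤ f x)
    (θ g : ℕ → Ω → H)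
    (hθmeas : ∀ n, Measurable (θ n))
    (hgmeas : ∀ n, Measurable (g n))
    (hrec : ∀ n : ℕ, 1 ≤ n → ∀ ω, θ (n + 1) ω = θ n ω - (1 / (β * n)) • g n ω)
    (hunbiased : ∀ n : ℕ, 1 ≤ n →
      μ[g n | MeasurableSpace.comap (θ n) inferInstance]
        =ᵐ[μ] fun ω => gradient f (θ n ω))
    (hg2int : ∀ n : ℕ, 1 ≤ n → Integrable (fun ω => ‖g n ω‖ ^ 2) μ)
    (hg2 : ∀ n : ℕ, 1 ≤ n → ∫ ω, ‖g n ω‖ ^ 2 ∂μ ≤ G ^ 2)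
    (hθint : ∀ n : ℕ, 1 ≤ n → Integrable (fun ω => ‖θ n ω - θstar‖ ^ 2) μ)
    (hfint : ∀ n : ℕ, 1 ≤ n → Integrable (fun ω => f (θ n ω)) μ) :
    ∀ n : ℕ, 1 ≤ n →
      ∫ ω, (f (θ n ω) - f θstar) ∂μ ≤
        β / 2 * (((n : ℝ) - 1) * ∫ ω, ‖θ n ω - θstar‖ ^ 2 ∂μ -
            (n : ℝ) * ∫ ω, ‖θ (n + 1) ω - θstar‖ ^ 2 ∂μ) +
          G ^ 2 / (2 * β * n) :=
  sgd_per_iteration_suboptimality_general hβ hconv hmin θ g hθmeas hrec hunbiased hg2int hg2 hθint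
    hfint
end

section
/- Let θ_1,…,θ_N be linearly independent vectors in a real vector space, let γ, γ' ∈ (0,1), and let θ^γ and θ^{γ'} be the EMA sequences of θ_1,…,θ_N with rates γ and γ' respectively. Fix indices 1 < n_1 < n_2 < n_3 ≤ N and coefficients c_1, c_2, c_3 ∈ (0,1) with c_1 + c_2 + c_3 = 1. If c_1 θ^γ_{n_1} + c_2 θ^γ_{n_2} + c_3 θ^γ_{n_3} = θ^{γ'}_m for some m ∈ {1,…,N}, then necessarily m = n_3. -/
/-- The EMA sequence of `θ 1, θ 2, …` with rate `γ`:
`θ^γ 1 = θ 1` and `θ^γ n = γ • θ^γ (n−1) + (1−γ) • θ n` for `n ≥ 2`. -/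
noncomputable def emaSeq {V : Type*} [AddCommGroup V] [Module ℝ V]
    (γ : ℝ) (θ : ℕ → V) : ℕ → V
  | 0 => θ 0
  | 1 => θ 1
  | n + 2 => γ • emaSeq γ θ (n + 1) + (1 - γ) • θ (n + 2)

/-!
The EMA `θ^γ n` is `(1 - γ) • θ n` (or `θ 1` when `n = 1`) plus a combination of `θ 1, …, θ (n-1)`.
So, in the basis `θ 1, …, θ N`, the highest index carrying a nonzero coefficient is `n₃` on the left
of the equation and `m` on the right, and these must agree.
-/

open Submodule

section

variable {V : Type*} [AddCommGroup V] [Module ℝ V] (θ : ℕ → V)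

lemma emaSeq_succ (γ : ℝ) {n : ℕ} (hn : 1 ≤ n) :
    emaSeq γ θ (n + 1) = γ • emaSeq γ θ n + (1 - γ) • θ (n + 1) := by
  obtain ⟨k, rfl⟩ := Nat.exists_eq_add_of_le' hn
  rfl

lemma span_image_Ico_mono {k l : ℕ} (h : k ≤ l) :
    span ℝ (θ '' Set.Ico 1 k) ≤ span ℝ (θ '' Set.Ico 1 l) :=
  span_mono (Set.image_mono (Set.Ico_subset_Ico_right h))

lemma emaSeq_mem_span_image_Ico (γ : ℝ) {n : ℕ} (hn : 1 ≤ n) :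
    emaSeq γ θ n ∈ span ℝ (θ '' Set.Ico 1 (n + 1)) := by
  induction n, hn using Nat.le_induction with
  | base => exact subset_span ⟨1, by simp, rfl⟩
  | succ n hn ih =>
    rw [emaSeq_succ θ γ hn]
    refine add_mem (smul_mem _ _ (span_image_Ico_mono θ n.succ.le_succ ih)) (smul_mem _ _ ?_)
    exact subset_span ⟨n + 1, by simp, rfl⟩

lemma emaSeq_mem_span_image_Ico_of_lt (γ : ℝ) {n k : ℕ} (hn : 1 ≤ n) (hk : n < k) :
    emaSeq γ θ n ∈ span ℝ (θ '' Set.Ico 1 k) :=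
  span_image_Ico_mono θ hk (emaSeq_mem_span_image_Ico θ γ hn)

lemma exists_emaSeq_sub_smul_mem_span {γ : ℝ} (hγ : γ ≠ 1) {n : ℕ} (hn : 1 ≤ n) :
    ∃ a ≠ (0 : ℝ), emaSeq γ θ n - a • θ n ∈ span ℝ (θ '' Set.Ico 1 n) := by
  obtain rfl | ⟨k, hk, rfl⟩ : n = 1 ∨ ∃ k, 1 ≤ k ∧ n = k + 1 :=
    (eq_or_lt_of_le hn).imp Eq.symm fun h => ⟨n - 1, by omega, by omega⟩
  · exact ⟨1, one_ne_zero, by simp [emaSeq]⟩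
  · refine ⟨1 - γ, sub_ne_zero.mpr hγ.symm, ?_⟩
    rw [emaSeq_succ θ γ hk, add_sub_cancel_right]
    exact smul_mem _ _ (emaSeq_mem_span_image_Ico θ γ hk)

lemma smul_notMem_span_image_Ico {N : ℕ} (hli : LinearIndependent ℝ (fun i : Fin N => θ (i.1 + 1)))
    {k : ℕ} (hk : 1 ≤ k) (hkN : k ≤ N) {a : ℝ} (ha : a ≠ 0) :
    a • θ k ∉ span ℝ (θ '' Set.Ico 1 k) := by
  obtain ⟨i, rfl⟩ := Nat.exists_eq_add_of_le' hk
  rw [smul_mem_iff _ ha]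
  have hsub : θ '' Set.Ico 1 (i + 1) ⊆ (fun j : Fin N => θ (j.1 + 1)) '' {j | j.1 < i} := by
    rintro _ ⟨j, ⟨hj1, hji⟩, rfl⟩
    obtain ⟨j, rfl⟩ := Nat.exists_eq_add_of_le' hj1
    exact ⟨⟨j, by omega⟩, by simpa using hji, rfl⟩
  exact fun hmem => hli.notMem_span_image (x := ⟨i, hkN⟩) (lt_irrefl i) (span_mono hsub hmem)

end

theorem ema_combination_index_eq_general
    {V : Type*} [AddCommGroup V] [Module ℝ V]
    (N : ℕ) (θ : ℕ → V)
    (hli : LinearIndependent ℝ (fun i : Fin N => θ (i.1 + 1)))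
    {γ γ' : ℝ} (hγ : γ ∈ Set.Ioo (0 : ℝ) 1) (hγ' : γ' ∈ Set.Ioo (0 : ℝ) 1)
    (n₁ n₂ n₃ : ℕ) (h₁ : 1 < n₁) (h₁₂ : n₁ < n₂) (h₂₃ : n₂ < n₃) (h₃N : n₃ ≤ N)
    (c₁ c₂ c₃ : ℝ)
    (hc₃ : c₃ ∈ Set.Ioo (0 : ℝ) 1)
    (m : ℕ) (hm1 : 1 ≤ m) (hmN : m ≤ N)
    (heq : c₁ • emaSeq γ θ n₁ + c₂ • emaSeq γ θ n₂ + c₃ • emaSeq γ θ n₃ = emaSeq γ' θ m) :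
    m = n₃ := by
  have mem {γ : ℝ} {n k : ℕ} (hn : 1 ≤ n) (hk : n < k) := emaSeq_mem_span_image_Ico_of_lt θ γ hn hk
  rcases lt_trichotomy m n₃ with hlt | rfl | hgt
  · obtain ⟨a, ha, hrest⟩ := exists_emaSeq_sub_smul_mem_span θ hγ.2.ne (show 1 ≤ n₃ by omega)
    refine absurd ?_ (smul_notMem_span_image_Ico θ hli (by omega) h₃N (mul_ne_zero hc₃.1.ne' ha))
    have hdecomp : (c₃ * a) • θ n₃ = emaSeq γ' θ m - c₁ • emaSeq γ θ n₁ - c₂ • emaSeq γ θ n₂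
        - c₃ • (emaSeq γ θ n₃ - a • θ n₃) := by
      rw [← heq]; module
    rw [hdecomp]
    exact sub_mem (sub_mem (sub_mem (mem hm1 hlt) (smul_mem _ _ (mem (by omega) (by omega))))
      (smul_mem _ _ (mem (by omega) (by omega)))) (smul_mem _ _ hrest)
  · rfl
  · obtain ⟨a, ha, hrest⟩ := exists_emaSeq_sub_smul_mem_span θ hγ'.2.ne hm1
    refine absurd ?_ (smul_notMem_span_image_Ico θ hli hm1 hmN ha)
    have hdecomp : a • θ m = c₁ • emaSeq γ θ n₁ + c₂ • emaSeq γ θ n₂ + c₃ • emaSeq γ θ n₃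
        - (emaSeq γ' θ m - a • θ m) := by
      rw [heq]; module
    rw [hdecomp]
    exact sub_mem (add_mem (add_mem (smul_mem _ _ (mem (by omega) (by omega)))
      (smul_mem _ _ (mem (by omega) (by omega)))) (smul_mem _ _ (mem (by omega) hgt))) hrest

/-- If `θ 1, …, θ N` are linearly independent, `γ, γ' ∈ (0,1)`,
`1 < n₁ < n₂ < n₃ ≤ N`, `c₁, c₂, c₃ ∈ (0,1)` with `c₁ + c₂ + c₃ = 1`, and
`c₁ • θ^γ n₁ + c₂ • θ^γ n₂ + c₃ • θ^γ n₃ = θ^γ' m` for some `1 ≤ m ≤ N`,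
then necessarily `m = n₃`. -/
theorem ema_combination_index_eq
    {V : Type*} [AddCommGroup V] [Module ℝ V]
    (N : ℕ) (θ : ℕ → V)
    (hli : LinearIndependent ℝ (fun i : Fin N => θ (i.1 + 1)))
    {γ γ' : ℝ} (hγ : γ ∈ Set.Ioo (0 : ℝ) 1) (hγ' : γ' ∈ Set.Ioo (0 : ℝ) 1)
    (n₁ n₂ n₃ : ℕ) (h₁ : 1 < n₁) (h₁₂ : n₁ < n₂) (h₂₃ : n₂ < n₃) (h₃N : n₃ ≤ N)
    (c₁ c₂ c₃ : ℝ) (hc₁ : c₁ ∈ Set.Ioo (0 : ℝ) 1) (hc₂ : c₂ ∈ Set.Ioo (0 : ℝ) 1)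
    (hc₃ : c₃ ∈ Set.Ioo (0 : ℝ) 1) (hsum : c₁ + c₂ + c₃ = 1)
    (m : ℕ) (hm1 : 1 ≤ m) (hmN : m ≤ N)
    (heq : c₁ • emaSeq γ θ n₁ + c₂ • emaSeq γ θ n₂ + c₃ • emaSeq γ θ n₃ = emaSeq γ' θ m) :
    m = n₃ :=
  ema_combination_index_eq_general N θ hli hγ hγ' n₁ n₂ n₃ h₁ h₁₂ h₂₃ h₃N c₁ c₂ c₃ hc₃ m hm1 hmN heq
end
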